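/- arXiv:2402.04859 — 8 statements merged into one kernel-verified Lean document; each statement's English description precedes it below -/
import Mathlib

section
/- If Z_1, ..., Z_{n+1} are exchangeable random variables and T is a statistic such that T(Z_1,...,Z_{n+1}) = 1 exactly when Z_{n+1} is strictly larger than all of Z_1,...,Z_n (and 0 otherwise), then the probability that T = 1 is at most 1/(n+1). -/
open MeasureTheory ProbabilityTheory
open scoped ENNReal

/-!
The events "coordinate `j` is the strict maximum" are pairwise disjoint, and exchangeability
(applied to the transposition of `j` and the last index) makes them all equally likely. Their
`n + 1` equal probabilities therefore sum to at most `1`.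
-/

universe u v

variable {ι : Type u} {α : Type v}

def strictMaxSet [LT α] (j : ι) : Set (ι → α) :=
  {f | ∀ i, i ≠ j → f i < f j}

lemma preimage_comp_perm_strictMaxSet [LT α] (σ : Equiv.Perm ι) (j : ι) :
    (fun f : ι → α => f ∘ σ) ⁻¹' strictMaxSet j = strictMaxSet (σ j) := by
  ext f
  simp only [strictMaxSet, Set.mem_preimage, Set.mem_ofPred_eq, Function.comp_apply]
  rw [σ.forall_congr_left]
  simp only [Equiv.apply_symm_apply, ne_eq, Equiv.symm_apply_eq]

lemma pairwise_disjoint_strictMaxSet [Preorder α] :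
    Pairwise (Function.onFun Disjoint (strictMaxSet : ι → Set (ι → α))) := by
  intro j k hjk
  refine Set.disjoint_left.mpr fun f hj hk => ?_
  exact lt_asymm (hj k hjk.symm) (hk j hjk)

lemma measurableSet_strictMaxSet [Countable ι] [LinearOrder α] [TopologicalSpace α]
    [OrderClosedTopology α] [SecondCountableTopology α] [MeasurableSpace α]
    [OpensMeasurableSpace α] (j : ι) : MeasurableSet (strictMaxSet j : Set (ι → α)) := by
  have : (strictMaxSet j : Set (ι → α)) = ⋂ i, ⋂ (_ : i ≠ j), {f | f i < f j} := by
    ext f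
    simp [strictMaxSet]
  rw [this]
  exact .iInter fun i => .iInter fun _ =>
    measurableSet_lt (measurable_pi_apply i) (measurable_pi_apply j)

lemma measurable_comp_perm [MeasurableSpace α] (σ : Equiv.Perm ι) :
    Measurable (fun f : ι → α => f ∘ σ) :=
  measurable_pi_lambda _ fun i => measurable_pi_apply (σ i)

section Exchangeable

variable [Fintype ι] [DecidableEq ι] [LinearOrder α] [TopologicalSpace α]
  [OrderClosedTopology α] [SecondCountableTopology α] [MeasurableSpace α]
  [OpensMeasurableSpace α] {μ : Measure (ι → α)}

lemma measure_strictMaxSet_eq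
    (hμ : ∀ σ : Equiv.Perm ι, μ.map (fun f : ι → α => f ∘ σ) = μ) (j k : ι) :
    μ (strictMaxSet j) = μ (strictMaxSet k) := by
  conv_lhs => rw [← hμ (Equiv.swap k j)]
  rw [Measure.map_apply (measurable_comp_perm _) (measurableSet_strictMaxSet j),
    preimage_comp_perm_strictMaxSet, Equiv.swap_apply_right]

lemma card_mul_measure_strictMaxSet_le
    (hμ : ∀ σ : Equiv.Perm ι, μ.map (fun f : ι → α => f ∘ σ) = μ) (j : ι) :
    Fintype.card ι * μ (strictMaxSet j) ≤ μ Set.univ :=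
  calc (Fintype.card ι : ℝ≥0∞) * μ (strictMaxSet j)
      = ∑ k : ι, μ (strictMaxSet k) := by
        simp [measure_strictMaxSet_eq hμ _ j]
    _ = μ (⋃ k, strictMaxSet k) := by
        rw [measure_iUnion pairwise_disjoint_strictMaxSet measurableSet_strictMaxSet, tsum_fintype]
    _ ≤ μ Set.univ := measure_mono (Set.subset_univ _)

end Exchangeable

theorem stmt0_general {Ω : Type*} [MeasurableSpace Ω] (P : Measure Ω) [IsProbabilityMeasure P]
    (n : ℕ) (Z : Fin (n + 1) → Ω → ℝ) (hZ : ∀ i, Measurable (Z i))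
    (hexch : ∀ σ : Equiv.Perm (Fin (n + 1)),
      Measure.map (fun ω => fun i => Z (σ i) ω) P = Measure.map (fun ω => fun i => Z i ω) P)
    (T : Ω → ℝ)
    (hT1 : ∀ ω, T ω = 1 ↔ ∀ i : Fin n, Z i.castSucc ω < Z (Fin.last n) ω) :
    P {ω | T ω = 1} ≤ 1 / (n + 1) := by
  set g : Ω → Fin (n + 1) → ℝ := fun ω i => Z i ω
  have hg : Measurable g := measurable_pi_lambda _ hZ
  have hinv : ∀ σ : Equiv.Perm (Fin (n + 1)),
      (P.map g).map (fun f => f ∘ σ) = P.map g := fun σ => by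
    rw [Measure.map_map (measurable_comp_perm σ) hg]
    exact hexch σ
  have hevent : {ω | T ω = 1} = g ⁻¹' strictMaxSet (Fin.last n) := by
    ext ω
    simp only [Set.mem_ofPred_eq, Set.mem_preimage, hT1, strictMaxSet, Fin.forall_fin_succ']
    simp [g, Fin.castSucc_ne_last]
  have hbound := card_mul_measure_strictMaxSet_le hinv (Fin.last n)
  rw [Measure.map_apply hg (measurableSet_strictMaxSet _), ← hevent,
    Measure.map_apply hg .univ, Set.preimage_univ, measure_univ,
    Fintype.card_fin, Nat.cast_succ] at hbound
  rw [ENNReal.le_div_iff_mul_le (.inl (by simp)) (.inl (by simp)), mul_comm]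
  exact hbound

/-- If `Z 0, ..., Z n` (i.e. `n+1` variables) are exchangeable real random variables and
`T` equals `1` exactly when `Z (Fin.last n)` is strictly larger than all the others
(and `0` otherwise), then `P (T = 1) ≤ 1/(n+1)`. -/
theorem stmt0 {Ω : Type*} [MeasurableSpace Ω] (P : Measure Ω) [IsProbabilityMeasure P]
    (n : ℕ) (Z : Fin (n + 1) → Ω → ℝ) (hZ : ∀ i, Measurable (Z i))
    (hexch : ∀ σ : Equiv.Perm (Fin (n + 1)),
      Measure.map (fun ω => fun i => Z (σ i) ω) P = Measure.map (fun ω => fun i => Z i ω) P)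
    (T : Ω → ℝ)
    (hT1 : ∀ ω, T ω = 1 ↔ ∀ i : Fin n, Z i.castSucc ω < Z (Fin.last n) ω)
    (hT0 : ∀ ω, T ω = 1 ∨ T ω = 0) :
    P {ω | T ω = 1} ≤ 1 / (n + 1) :=
  stmt0_general P n Z hZ hexch T hT1
end

section
/- Let Z_1,...,Z_{n+1} be exchangeable real-valued random variables and define the rank-based p-value p = (1/(n+1)) · #{i ∈ {1,...,n+1} : Z_i ≥ Z_{n+1}}. Then for every ε ∈ (0,1), P(p ≤ ε) ≤ ε. -/
open MeasureTheory ProbabilityTheory Finset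
open scoped ENNReal

private lemma card_low_rank_le {n : ℕ} (k : ℕ) (v : Fin (n + 1) → ℝ) :
    (univ.filter fun j : Fin (n + 1) =>
      (univ.filter fun i => v j ≤ v i).card ≤ k).card ≤ k := by
  classical
  set S := univ.filter fun j : Fin (n + 1) =>
      (univ.filter fun i => v j ≤ v i).card ≤ k with hS
  rcases S.eq_empty_or_nonempty with h | h
  · simp [h]
  · obtain ⟨j0, hj0S, hmin⟩ := S.exists_min_image v h
    have h1 : S ⊆ univ.filter fun i => v j0 ≤ v i := by
      intro j hj
      simp only [mem_filter, mem_univ, true_and]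
      exact hmin j hj
    calc S.card ≤ (univ.filter fun i => v j0 ≤ v i).card := card_le_card h1
      _ ≤ k := by
        have := (mem_filter.mp hj0S).2
        exact this

private lemma card_filter_comp_perm {ι : Type*} [Fintype ι] [DecidableEq ι]
    (σ : Equiv.Perm ι) (q : ι → Prop) [DecidablePred q] :
    (univ.filter fun i => q (σ i)).card = (univ.filter q).card := by
  apply Finset.card_bij (fun i _ => σ i)
  · intro a ha; simp_all
  · intro a _ b _ hab; exact σ.injective hab
  · intro b hb; exact ⟨σ.symm b, by simp_all, by simp⟩

private lemma measurable_rk {n : ℕ} (j : Fin (n + 1)) :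
    Measurable fun v : Fin (n + 1) → ℝ =>
      (univ.filter fun i => v j ≤ v i).card := by
  classical
  have : (fun v : Fin (n + 1) → ℝ => (univ.filter fun i => v j ≤ v i).card)
      = fun v => ∑ i : Fin (n + 1), if v j ≤ v i then 1 else 0 := by
    funext v; rw [Finset.card_filter]
  rw [this]
  exact Finset.measurable_sum _ fun i _ =>
    Measurable.ite (measurableSet_le (measurable_pi_apply j) (measurable_pi_apply i))
      measurable_const measurable_const

/-- For exchangeable real random variables `Z 0, ..., Z n`, the rank-based p-value
`p = #{i : Z i ≥ Z (n+1)} / (n+1)` satisfies `P (p ≤ ε) ≤ ε` for every `ε ∈ (0,1)`. -/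
theorem stmt4 {Ω : Type*} [MeasurableSpace Ω] (P : Measure Ω) [IsProbabilityMeasure P]
    (n : ℕ) (Z : Fin (n + 1) → Ω → ℝ) (hZ : ∀ i, Measurable (Z i))
    (hexch : ∀ σ : Equiv.Perm (Fin (n + 1)),
      Measure.map (fun ω => fun i => Z (σ i) ω) P = Measure.map (fun ω => fun i => Z i ω) P)
    (p : Ω → ℝ)
    (hp : ∀ ω, p ω =
      ((Finset.univ.filter fun i : Fin (n + 1) => Z (Fin.last n) ω ≤ Z i ω).card : ℝ) / (n + 1))
    (ε : ℝ) (hε : ε ∈ Set.Ioo (0 : ℝ) 1) :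
    P {ω | p ω ≤ ε} ≤ ENNReal.ofReal ε := by
  classical
  obtain ⟨hε0, hε1⟩ := hε
  set k : ℕ := ⌊ε * (n + 1)⌋₊ with hk
  have hn1 : (0 : ℝ) < (n : ℝ) + 1 := by positivity
  -- the set A of vectors with low rank of last coordinate
  set A : Set (Fin (n + 1) → ℝ) :=
    {v | (univ.filter fun i => v (Fin.last n) ≤ v i).card ≤ k} with hA
  have hAmeas : MeasurableSet A := by
    have : A = (fun v : Fin (n + 1) → ℝ =>
        (univ.filter fun i => v (Fin.last n) ≤ v i).card) ⁻¹' Set.Iic k := rfl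
    rw [this]
    exact (measurable_rk _) measurableSet_Iic
  -- the events
  set E : Fin (n + 1) → Set Ω := fun j =>
    {ω | (univ.filter fun i => Z j ω ≤ Z i ω).card ≤ k} with hE
  -- rewrite the target event
  have hevent : {ω | p ω ≤ ε} = E (Fin.last n) := by
    ext ω
    simp only [Set.mem_setOf_eq, hE, hp ω]
    rw [div_le_iff₀ hn1, ← Nat.le_floor_iff (by positivity)]
  -- E j as preimages under permuted maps
  have hpre : ∀ σ : Equiv.Perm (Fin (n + 1)),
      E (σ (Fin.last n)) = (fun ω => fun i => Z (σ i) ω) ⁻¹' A := by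
    intro σ
    ext ω
    simp only [hE, hA, Set.mem_setOf_eq, Set.mem_preimage]
    rw [card_filter_comp_perm σ (fun i => Z (σ (Fin.last n)) ω ≤ Z i ω)]
  have hmap : ∀ σ : Equiv.Perm (Fin (n + 1)),
      Measurable fun ω => fun i => Z (σ i) ω :=
    fun σ => measurable_pi_lambda _ fun i => hZ (σ i)
  -- all events have equal probability
  have heq : ∀ j, P (E j) = P (E (Fin.last n)) := by
    intro j
    have h1 : E j = (fun ω => fun i => Z (Equiv.swap j (Fin.last n) i) ω) ⁻¹' A := by
      have := hpre (Equiv.swap j (Fin.last n))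
      rwa [Equiv.swap_apply_right] at this
    have h2 : E (Fin.last n) = (fun ω => fun i => Z i ω) ⁻¹' A := by
      have := hpre (Equiv.refl _)
      simpa using this
    rw [h1, h2,
      ← Measure.map_apply (hmap (Equiv.swap j (Fin.last n))) hAmeas,
      hexch (Equiv.swap j (Fin.last n)),
      Measure.map_apply (measurable_pi_lambda _ fun i => hZ i) hAmeas]
  have hEmeas : ∀ j, MeasurableSet (E j) := by
    intro j
    have h1 : E j = (fun ω => fun i => Z (Equiv.swap j (Fin.last n) i) ω) ⁻¹' A := by
      have := hpre (Equiv.swap j (Fin.last n))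
      rwa [Equiv.swap_apply_right] at this
    rw [h1]
    exact (hmap _) hAmeas
  -- sum of probabilities bounded by k
  have hsum : ∑ j : Fin (n + 1), P (E j) ≤ (k : ℝ≥0∞) := by
    have h1 : ∀ j, P (E j) = ∫⁻ ω, (E j).indicator (fun _ => (1 : ℝ≥0∞)) ω ∂P := by
      intro j; exact (lintegral_indicator_one (hEmeas j)).symm
    calc ∑ j : Fin (n + 1), P (E j)
        = ∫⁻ ω, ∑ j : Fin (n + 1), (E j).indicator (fun _ => (1 : ℝ≥0∞)) ω ∂P := by
          rw [lintegral_finset_sum]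
          · exact Finset.sum_congr rfl fun j _ => h1 j
          · exact fun j _ => (measurable_const.indicator (hEmeas j))
      _ ≤ ∫⁻ _, (k : ℝ≥0∞) ∂P := by
          apply lintegral_mono
          intro ω
          dsimp only
          have : ∑ j : Fin (n + 1), (E j).indicator (fun _ => (1 : ℝ≥0∞)) ω
              = ((univ.filter fun j : Fin (n + 1) => ω ∈ E j).card : ℝ≥0∞) := by
            rw [← Finset.sum_boole]
            refine Finset.sum_congr rfl fun j _ => ?_
            simp [Set.indicator_apply]
          rw [this]
          have hcard : (univ.filter fun j : Fin (n + 1) => ω ∈ E j).card ≤ k := by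
            have := card_low_rank_le k (fun i => Z i ω)
            simpa [hE] using this
          exact_mod_cast Nat.cast_le.mpr hcard
      _ = (k : ℝ≥0∞) := by simp
  -- the sum equals (n+1) * P (E last)
  have hsum2 : ((n : ℝ≥0∞) + 1) * P (E (Fin.last n)) ≤ (k : ℝ≥0∞) := by
    calc ((n : ℝ≥0∞) + 1) * P (E (Fin.last n))
        = ∑ _j : Fin (n + 1), P (E (Fin.last n)) := by
          rw [Finset.sum_const, Finset.card_univ, Fintype.card_fin, nsmul_eq_mul]
          push_cast
          ring
      _ = ∑ j : Fin (n + 1), P (E j) := Finset.sum_congr rfl fun j _ => (heq j).symm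
      _ ≤ (k : ℝ≥0∞) := hsum
  -- conclude
  rw [hevent]
  have hdiv : P (E (Fin.last n)) ≤ (k : ℝ≥0∞) / ((n : ℝ≥0∞) + 1) := by
    rw [ENNReal.le_div_iff_mul_le (by simp) (by simp)]
    rwa [mul_comm]
  refine hdiv.trans ?_
  have hkle : (k : ℝ) / ((n : ℝ) + 1) ≤ ε := by
    rw [div_le_iff₀ hn1]
    exact Nat.floor_le (by positivity)
  calc (k : ℝ≥0∞) / ((n : ℝ≥0∞) + 1)
      = ENNReal.ofReal ((k : ℝ) / ((n : ℝ) + 1)) := by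
        rw [ENNReal.ofReal_div_of_pos hn1]
        congr 1
        · simp
        · rw [ENNReal.ofReal_add (by positivity) zero_le_one]
          simp
    _ ≤ ENNReal.ofReal ε := ENNReal.ofReal_le_ofReal hkle
end

section
/- Conformal prediction validity: let A be a measurable nonconformity score assigning to each bag of n+1 examples and a distinguished element a real score, invariant under permutations of the other n examples. For i.i.d. (in fact exchangeable) examples Z_1,...,Z_{n+1}, define scores α_i = A applied with Z_i distinguished, and the p-value p = (#{i : α_i ≥ α_{n+1}})/(n+1). Then P(p ≤ ε) ≤ ε for every ε ∈ (0,1). -/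
open MeasureTheory ProbabilityTheory
open scoped ENNReal

lemma rank_card_le' {m : ℕ} (w : Fin m → ℝ) (k : ℕ) :
    (Finset.univ.filter fun i =>
      (Finset.univ.filter fun j => w i ≤ w j).card ≤ k).card ≤ k := by
  set S := Finset.univ.filter fun i : Fin m =>
      (Finset.univ.filter fun j => w i ≤ w j).card ≤ k with hS
  rcases S.eq_empty_or_nonempty with h | h
  · simp [h]
  · obtain ⟨i0, hi0, hmin⟩ := S.exists_min_image w h
    have hsub : S ⊆ Finset.univ.filter fun j => w i0 ≤ w j := by
      intro j hj
      simp only [Finset.mem_filter, Finset.mem_univ, true_and]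
      exact hmin j hj
    have h2 : (Finset.univ.filter fun j => w i0 ≤ w j).card ≤ k := by
      rw [hS, Finset.mem_filter] at hi0; exact hi0.2
    exact le_trans (Finset.card_le_card hsub) h2


/-- Conformal prediction validity: `A` is a measurable nonconformity score, invariant in the
sense that permuting the examples and correspondingly moving the distinguished index leaves
the score unchanged.  For exchangeable examples `Z 0, ..., Z n`, with scores
`α i ω = A (Z · ω) i` and p-value `p = #{i : α i ≥ α (n+1)} / (n+1)`,
we have `P (p ≤ ε) ≤ ε` for every `ε ∈ (0,1)`. -/
theorem stmt5 {Ω 𝒵 : Type*} [MeasurableSpace Ω] [MeasurableSpace 𝒵]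
    (P : Measure Ω) [IsProbabilityMeasure P]
    (n : ℕ) (Z : Fin (n + 1) → Ω → 𝒵) (hZ : ∀ i, Measurable (Z i))
    (hexch : ∀ σ : Equiv.Perm (Fin (n + 1)),
      Measure.map (fun ω => fun i => Z (σ i) ω) P = Measure.map (fun ω => fun i => Z i ω) P)
    (A : (Fin (n + 1) → 𝒵) → Fin (n + 1) → ℝ)
    (hAmeas : ∀ i, Measurable fun z => A z i)
    (hAinv : ∀ (σ : Equiv.Perm (Fin (n + 1))) (z : Fin (n + 1) → 𝒵) (i : Fin (n + 1)),
      A (fun j => z (σ j)) (σ⁻¹ i) = A z i)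
    (α : Fin (n + 1) → Ω → ℝ) (hα : ∀ i ω, α i ω = A (fun j => Z j ω) i)
    (p : Ω → ℝ)
    (hp : ∀ ω, p ω =
      ((Finset.univ.filter fun i : Fin (n + 1) => α (Fin.last n) ω ≤ α i ω).card : ℝ) / (n + 1))
    (ε : ℝ) (hε : ε ∈ Set.Ioo (0 : ℝ) 1) :
    P {ω | p ω ≤ ε} ≤ ENNReal.ofReal ε := by
  classical
  obtain ⟨hε0, hε1⟩ := hε
  set k := ⌊ε * (n + 1)⌋₊ with hk
  -- rank function
  set r : (Fin (n + 1) → 𝒵) → Fin (n + 1) → ℕ :=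
    fun z i => (Finset.univ.filter fun j => A z i ≤ A z j).card with hr
  -- A(z∘σ, j) = A(z, σ j)
  have hAcomp : ∀ (σ : Equiv.Perm (Fin (n + 1))) (z : Fin (n + 1) → 𝒵) (j : Fin (n + 1)),
      A (fun l => z (σ l)) j = A z (σ j) := by
    intro σ z j
    have := hAinv σ z (σ j)
    simpa using this
  -- r(z∘σ, i) = r(z, σ i)
  have hrperm : ∀ (σ : Equiv.Perm (Fin (n + 1))) (z : Fin (n + 1) → 𝒵) (i : Fin (n + 1)),
      r (fun l => z (σ l)) i = r z (σ i) := by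
    intro σ z i
    simp only [hr, hAcomp]
    apply Finset.card_bij (fun j _ => σ j)
    · intro j hj
      simp only [Finset.mem_filter, Finset.mem_univ, true_and] at hj ⊢
      exact hj
    · intro a _ b _ hab
      exact σ.injective hab
    · intro b hb
      refine ⟨σ⁻¹ b, ?_, by simp⟩
      simp only [Finset.mem_filter, Finset.mem_univ, true_and] at hb ⊢
      simpa using hb
  -- measurability
  have hrmeas : ∀ i, Measurable fun z => r z i := by
    intro i
    simp only [hr, Finset.card_filter]
    apply Finset.measurable_sum
    intro j _
    exact Measurable.ite (measurableSet_le (hAmeas i) (hAmeas j))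
      measurable_const measurable_const
  have hZvec : Measurable fun ω => fun i => Z i ω :=
    measurable_pi_lambda _ fun i => hZ i
  have hZvecσ : ∀ σ : Equiv.Perm (Fin (n + 1)),
      Measurable fun ω => fun i => Z (σ i) ω :=
    fun σ => measurable_pi_lambda _ fun i => hZ (σ i)
  set T : Fin (n + 1) → Set (Fin (n + 1) → 𝒵) := fun i => {z | r z i ≤ k} with hT
  have hTmeas : ∀ i, MeasurableSet (T i) := by
    intro i
    exact (hrmeas i) (measurableSet_Iic : MeasurableSet (Set.Iic k))
  set E : Fin (n + 1) → Set Ω := fun i => (fun ω => fun j => Z j ω) ⁻¹' T i with hE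
  have hEmeas : ∀ i, MeasurableSet (E i) := fun i => hZvec (hTmeas i)
  -- all E i have the same measure
  have hsame : ∀ i, P (E i) = P (E (Fin.last n)) := by
    intro i
    set σ := Equiv.swap i (Fin.last n) with hσ
    have h1 : Measure.map (fun ω => fun j => Z (σ j) ω) P (T i)
        = Measure.map (fun ω => fun j => Z j ω) P (T i) := by rw [hexch σ]
    rw [Measure.map_apply (hZvecσ σ) (hTmeas i),
        Measure.map_apply hZvec (hTmeas i)] at h1
    have h2 : (fun ω => fun j => Z (σ j) ω) ⁻¹' T i = E (σ i) := by
      ext ω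
      simp only [hE, Set.mem_preimage, hT, Set.mem_setOf_eq]
      rw [hrperm σ (fun j => Z j ω) i]
    rw [h2] at h1
    have : σ i = Fin.last n := Equiv.swap_apply_left i (Fin.last n)
    rw [this] at h1
    exact h1.symm
  -- sum of measures bounded by k
  have hsum : ∑ i : Fin (n + 1), P (E i) ≤ (k : ℝ≥0∞) := by
    have h1 : ∀ i, P (E i) = ∫⁻ ω, (E i).indicator (fun _ => (1 : ℝ≥0∞)) ω ∂P := by
      intro i
      rw [lintegral_indicator (hEmeas i)]
      simp
    calc ∑ i : Fin (n + 1), P (E i)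
        = ∫⁻ ω, ∑ i : Fin (n + 1), (E i).indicator (fun _ => (1 : ℝ≥0∞)) ω ∂P := by
          rw [lintegral_finset_sum]
          · exact Finset.sum_congr rfl fun i _ => h1 i
          · intro i _
            exact (measurable_const.indicator (hEmeas i))
      _ ≤ ∫⁻ _, (k : ℝ≥0∞) ∂P := by
          apply lintegral_mono
          intro ω
          have : ∑ i : Fin (n + 1), (E i).indicator (fun _ => (1 : ℝ≥0∞)) ω
              = ((Finset.univ.filter fun i => ω ∈ E i).card : ℝ≥0∞) := by
            rw [Finset.card_filter]
            push_cast
            apply Finset.sum_congr rfl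
            intro i _
            simp [Set.indicator_apply]
          dsimp only
          rw [this]
          have hcard : (Finset.univ.filter fun i => ω ∈ E i).card ≤ k := by
            have : (Finset.univ.filter fun i => ω ∈ E i)
                = Finset.univ.filter fun i =>
                  (Finset.univ.filter fun j =>
                    A (fun l => Z l ω) i ≤ A (fun l => Z l ω) j).card ≤ k := by
              apply Finset.filter_congr
              intro i _
              simp only [hE, Set.mem_preimage, hT, Set.mem_setOf_eq, hr]
            rw [this]
            exact rank_card_le' (fun i => A (fun l => Z l ω) i) k
          exact_mod_cast Nat.cast_le.mpr hcard
      _ = (k : ℝ≥0∞) := by simp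
  -- (n+1) * P(E last) ≤ k
  have hmul : ((n : ℝ≥0∞) + 1) * P (E (Fin.last n)) ≤ (k : ℝ≥0∞) := by
    have : ∑ i : Fin (n + 1), P (E i) = ((n : ℝ≥0∞) + 1) * P (E (Fin.last n)) := by
      rw [Finset.sum_congr rfl fun i _ => hsame i, Finset.sum_const, Finset.card_univ,
        Fintype.card_fin, nsmul_eq_mul]
      push_cast
      ring
    rw [← this]; exact hsum
  -- the target set is E last
  have hset : {ω | p ω ≤ ε} = E (Fin.last n) := by
    ext ω
    simp only [Set.mem_setOf_eq, hE, Set.mem_preimage, hT, hr]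
    rw [hp ω]
    have hfilter : (Finset.univ.filter fun i : Fin (n + 1) => α (Fin.last n) ω ≤ α i ω)
        = Finset.univ.filter fun j =>
            A (fun l => Z l ω) (Fin.last n) ≤ A (fun l => Z l ω) j := by
      apply Finset.filter_congr
      intro i _
      rw [hα i ω, hα (Fin.last n) ω]
    rw [hfilter]
    set N := (Finset.univ.filter fun j =>
      A (fun l => Z l ω) (Fin.last n) ≤ A (fun l => Z l ω) j).card
    have hpos : (0 : ℝ) < (n : ℝ) + 1 := by positivity
    rw [div_le_iff₀ hpos, hk, Nat.le_floor_iff (by positivity)]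
  rw [hset]
  -- conclude
  have hne : ((n : ℝ≥0∞) + 1) ≠ 0 := by
    simp
  have hnt : ((n : ℝ≥0∞) + 1) ≠ ⊤ := by
    simp [ENNReal.add_eq_top]
  have hdiv : P (E (Fin.last n)) ≤ (k : ℝ≥0∞) / ((n : ℝ≥0∞) + 1) := by
    rw [ENNReal.le_div_iff_mul_le (Or.inl hne) (Or.inl hnt), mul_comm]
    exact hmul
  refine hdiv.trans ?_
  rw [ENNReal.div_le_iff hne hnt]
  have h1 : (k : ℝ≥0∞) = ENNReal.ofReal (k : ℝ) := by
    rw [ENNReal.ofReal_natCast]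
  have h2 : ENNReal.ofReal ε * ((n : ℝ≥0∞) + 1) = ENNReal.ofReal (ε * ((n : ℝ) + 1)) := by
    rw [ENNReal.ofReal_mul hε0.le]
    congr 1
    rw [ENNReal.ofReal_add (by positivity) zero_le_one]
    simp [ENNReal.ofReal_natCast]
  rw [h1, h2]
  apply ENNReal.ofReal_le_ofReal
  exact Nat.floor_le (by positivity)
end

section
/- Coverage guarantee of conformal prediction: with the setup of conformal p-values from an exchangeable sequence (x_1,y_1),...,(x_n,y_n),(x_{n+1},y_{n+1}), define the conformal prediction set Γ^ε = {y ∈ Y : p-value of ((x_1,y_1),...,(x_n,y_n),(x_{n+1},y)) > ε}. Then P(y_{n+1} ∈ Γ^ε) ≥ 1 − ε. -/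
open MeasureTheory ProbabilityTheory

/-- Coverage guarantee of conformal prediction: for an exchangeable sequence of examples
`(x i, y i)`, `i = 0, ..., n`, with a permutation-equivariant nonconformity measure `A`,
define the conformal p-value of an augmented sequence and the prediction set
`Γ ω = {y | p-value of ((x 0,y 0),...,(x n, y n) with last label replaced by y) > ε}`.
Then `P (y (n+1) ∈ Γ) ≥ 1 − ε`. -/
theorem stmt6 {Ω 𝒳 𝒴 : Type*} [MeasurableSpace Ω] [MeasurableSpace 𝒳] [MeasurableSpace 𝒴]
    (P : Measure Ω) [IsProbabilityMeasure P]
    (n : ℕ) (x : Fin (n + 1) → Ω → 𝒳) (y : Fin (n + 1) → Ω → 𝒴)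
    (hxy : ∀ i, Measurable fun ω => (x i ω, y i ω))
    (hexch : ∀ σ : Equiv.Perm (Fin (n + 1)),
      Measure.map (fun ω => fun i => (x (σ i) ω, y (σ i) ω)) P
        = Measure.map (fun ω => fun i => (x i ω, y i ω)) P)
    (A : (Fin (n + 1) → 𝒳 × 𝒴) → Fin (n + 1) → ℝ)
    (hAmeas : ∀ i, Measurable fun z => A z i)
    (hAinv : ∀ (σ : Equiv.Perm (Fin (n + 1))) (z : Fin (n + 1) → 𝒳 × 𝒴) (i : Fin (n + 1)),
      A (fun j => z (σ j)) (σ⁻¹ i) = A z i)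
    (pval : (Fin (n + 1) → 𝒳 × 𝒴) → ℝ)
    (hpval : ∀ z, pval z =
      ((Finset.univ.filter fun i : Fin (n + 1) => A z (Fin.last n) ≤ A z i).card : ℝ) / (n + 1))
    (ε : ℝ) (hε : ε ∈ Set.Ioo (0 : ℝ) 1)
    (Γ : Ω → Set 𝒴)
    (hΓ : ∀ ω, Γ ω = {y' : 𝒴 | ε < pval
      (Function.update (fun i => (x i ω, y i ω)) (Fin.last n) (x (Fin.last n) ω, y'))}) :
    1 - ENNReal.ofReal ε ≤ P {ω | y (Fin.last n) ω ∈ Γ ω} := by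
  obtain ⟨hε0, hε1⟩ := hε
  set Z : Ω → (Fin (n+1) → 𝒳 × 𝒴) := fun ω i => (x i ω, y i ω) with hZ
  have hZmeas : Measurable Z := measurable_pi_lambda _ hxy
  set k : ℕ := ⌊ε * (n+1)⌋₊ with hk
  set r : (Fin (n+1) → 𝒳 × 𝒴) → Fin (n+1) → ℕ :=
    fun z i => (Finset.univ.filter fun j => A z i ≤ A z j).card with hr
  -- measurability
  have hrmeas : ∀ i, Measurable fun z => r z i := by
    intro i
    have heq : (fun z => r z i)
        = fun z => ∑ j : Fin (n+1), if A z i ≤ A z j then 1 else 0 := by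
      funext z
      simp only [hr]
      rw [Finset.card_filter]
    rw [heq]
    exact Finset.measurable_sum _ fun j _ =>
      Measurable.ite (measurableSet_le (hAmeas i) (hAmeas j)) measurable_const measurable_const
  have hE : ∀ i : Fin (n+1), MeasurableSet {z : Fin (n+1) → 𝒳 × 𝒴 | r z i ≤ k} := by
    intro i
    exact (hrmeas i) (measurableSet_le measurable_id measurable_const)
  -- combinatorial bound
  have hcomb : ∀ z : Fin (n+1) → 𝒳 × 𝒴,
      (Finset.univ.filter fun i => r z i ≤ k).card ≤ k := by
    intro z
    set S := Finset.univ.filter fun i => r z i ≤ k with hS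
    rcases S.eq_empty_or_nonempty with h | h
    · simp [h]
    · obtain ⟨i0, hi0S, hmin⟩ := S.exists_min_image (fun i => A z i) h
      have hsub : S ⊆ Finset.univ.filter fun j => A z i0 ≤ A z j := by
        intro i hi
        simp only [Finset.mem_filter, Finset.mem_univ, true_and]
        exact hmin i hi
      calc S.card ≤ r z i0 := Finset.card_le_card hsub
        _ ≤ k := by
          have := Finset.mem_filter.mp hi0S
          exact this.2
  -- exchangeability: all events have the same probability
  have hperm : ∀ i : Fin (n+1),
      P (Z ⁻¹' {z | r z i ≤ k}) = P (Z ⁻¹' {z | r z (Fin.last n) ≤ k}) := by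
    intro i
    set σ := Equiv.swap (Fin.last n) i with hσ
    have hA' : ∀ (z : Fin (n+1) → 𝒳 × 𝒴) (j : Fin (n+1)),
        A (fun j => z (σ j)) j = A z (σ j) := by
      intro z j
      have h := hAinv σ z (σ j)
      simpa using h
    have hrσ : ∀ z : Fin (n+1) → 𝒳 × 𝒴, r (fun j => z (σ j)) (Fin.last n) = r z i := by
      intro z
      simp only [hr, hA']
      have hcard : (Finset.univ.filter fun j => A z (σ (Fin.last n)) ≤ A z (σ j)).card
          = (Finset.univ.filter fun j => A z (σ (Fin.last n)) ≤ A z j).card := by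
        apply Finset.card_equiv σ
        intro j
        simp
      rw [hcard, hσ, Equiv.swap_apply_left]
    have hWmeas : Measurable fun ω => fun j => Z ω (σ j) :=
      measurable_pi_lambda _ fun j => hxy (σ j)
    have h1 : Z ⁻¹' {z | r z i ≤ k}
        = (fun ω => fun j => Z ω (σ j)) ⁻¹' {z | r z (Fin.last n) ≤ k} := by
      ext ω
      simp only [Set.mem_preimage, Set.mem_setOf_eq, hrσ]
    rw [h1, ← Measure.map_apply hWmeas (hE _), ← Measure.map_apply hZmeas (hE _)]
    congr 1
    exact hexch σ
  -- sum bound via indicators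
  have hsum : ∑ i : Fin (n+1), P (Z ⁻¹' {z | r z i ≤ k}) ≤ (k : ENNReal) := by
    have heq : ∀ i : Fin (n+1), P (Z ⁻¹' {z | r z i ≤ k})
        = ∫⁻ ω, Set.indicator (Z ⁻¹' {z | r z i ≤ k}) (1 : Ω → ENNReal) ω ∂P := by
      intro i
      exact (lintegral_indicator_one (hZmeas (hE i))).symm
    calc ∑ i : Fin (n+1), P (Z ⁻¹' {z | r z i ≤ k})
        = ∫⁻ ω, ∑ i : Fin (n+1),
            Set.indicator (Z ⁻¹' {z | r z i ≤ k}) (1 : Ω → ENNReal) ω ∂P := by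
          rw [lintegral_finset_sum]
          · exact Finset.sum_congr rfl fun i _ => heq i
          · intro i _
            exact (measurable_const.indicator (hZmeas (hE i)))
      _ ≤ ∫⁻ _, (k : ENNReal) ∂P := by
          apply lintegral_mono
          intro ω
          have hind : ∑ i : Fin (n+1),
              Set.indicator (Z ⁻¹' {z | r z i ≤ k}) (1 : Ω → ENNReal) ω
              = ((Finset.univ.filter fun i => r (Z ω) i ≤ k).card : ENNReal) := by
            rw [Finset.card_filter]
            push_cast
            apply Finset.sum_congr rfl
            intro i _
            by_cases h : r (Z ω) i ≤ k <;> simp [Set.indicator_apply, h]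
          dsimp only
          rw [hind]
          exact_mod_cast Nat.cast_le.mpr (hcomb (Z ω))
      _ = (k : ENNReal) := by simp
  -- probability of the bad event
  have hlast : P (Z ⁻¹' {z | r z (Fin.last n) ≤ k}) ≤ ENNReal.ofReal ε := by
    have h1 : ((n : ENNReal) + 1) * P (Z ⁻¹' {z | r z (Fin.last n) ≤ k}) ≤ (k : ENNReal) := by
      have : ∑ i : Fin (n+1), P (Z ⁻¹' {z | r z i ≤ k})
          = ((n : ENNReal) + 1) * P (Z ⁻¹' {z | r z (Fin.last n) ≤ k}) := by
        rw [Finset.sum_congr rfl fun i _ => hperm i, Finset.sum_const, Finset.card_univ,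
          Fintype.card_fin, nsmul_eq_mul]
        congr 1
        push_cast
        ring
      rw [← this]; exact hsum
    have h2 : (k : ENNReal) ≤ ((n : ENNReal) + 1) * ENNReal.ofReal ε := by
      have hkr : (k : ℝ) ≤ ε * (n + 1) := Nat.floor_le (by positivity)
      have : (k : ENNReal) = ENNReal.ofReal (k : ℝ) := by
        simp [ENNReal.ofReal_natCast]
      rw [this]
      calc ENNReal.ofReal (k : ℝ) ≤ ENNReal.ofReal (ε * (n + 1)) :=
            ENNReal.ofReal_le_ofReal hkr
        _ = ENNReal.ofReal ε * ENNReal.ofReal ((n : ℝ) + 1) := by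
            rw [ENNReal.ofReal_mul hε0.le]
        _ = ((n : ENNReal) + 1) * ENNReal.ofReal ε := by
            rw [mul_comm]
            congr 1
            rw [ENNReal.ofReal_add (by positivity) (by norm_num)]
            simp [ENNReal.ofReal_natCast]
    have hne : ((n : ENNReal) + 1) ≠ 0 := by simp
    have htop : ((n : ENNReal) + 1) ≠ ⊤ := by simp [ENNReal.add_ne_top]
    exact (ENNReal.mul_le_mul_iff_right hne htop).mp (h1.trans h2)
  -- identify the target set
  have hset : {ω | y (Fin.last n) ω ∈ Γ ω} = (Z ⁻¹' {z | r z (Fin.last n) ≤ k})ᶜ := by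
    ext ω
    simp only [Set.mem_setOf_eq, hΓ, Set.mem_compl_iff, Set.mem_preimage]
    rw [show ((x (Fin.last n) ω, y (Fin.last n) ω) : 𝒳 × 𝒴)
        = (fun i => (x i ω, y i ω)) (Fin.last n) from rfl, Function.update_eq_self]
    rw [hpval]
    have hpos : (0 : ℝ) < (n : ℝ) + 1 := by positivity
    rw [lt_div_iff₀ hpos]
    constructor
    · intro h hle
      have : (r (Z ω) (Fin.last n) : ℝ) ≤ ε * ((n : ℝ) + 1) :=
        (Nat.le_floor_iff (by positivity)).mp hle
      have h' : ε * ((n : ℝ) + 1) <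
          ((Finset.univ.filter fun i => A (Z ω) (Fin.last n) ≤ A (Z ω) i).card : ℝ) := h
      rw [hr] at this
      linarith
    · intro h
      have : ¬ ((r (Z ω) (Fin.last n) : ℝ) ≤ ε * ((n : ℝ) + 1)) := by
        intro hle
        exact h ((Nat.le_floor_iff (by positivity)).mpr hle)
      rw [hr] at this
      push_neg at this
      linarith
  rw [hset, prob_compl_eq_one_sub (hZmeas (hE _))]
  exact tsub_le_tsub_left hlast 1
end

section
/- Rank uniformity: if Z_1,...,Z_{n+1} are exchangeable real random variables that are almost surely pairwise distinct, then the rank of Z_{n+1} among Z_1,...,Z_{n+1} is uniformly distributed on {1,...,n+1}. -/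
/-!
Among pairwise distinct values the ranks `#{i | v i ≤ v j}` run bijectively through
`{1, …, m}`, so for each `k` the events `{rank of Z j = k}`, `j = 1, …, m`, partition the
sample space up to a null set. Exchangeability, applied to transpositions, makes these `m`
events equiprobable, hence each has probability `1 / m`.
-/

open MeasureTheory Finset Function

open scoped ENNReal

section Rank

variable {ι α : Type*} [Fintype ι] [LinearOrder α]

def rankOf (v : ι → α) (j : ι) : ℕ := #{i | v i ≤ v j}

lemma rankOf_comp_perm (v : ι → α) (σ : Equiv.Perm ι) (j : ι) :
    rankOf (v ∘ σ) j = rankOf v (σ j) :=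
  card_equiv σ (by simp)

lemma one_le_rankOf (v : ι → α) (j : ι) : 1 ≤ rankOf v j :=
  card_pos.2 ⟨j, by simp⟩

lemma rankOf_le_card (v : ι → α) (j : ι) : rankOf v j ≤ Fintype.card ι :=
  card_le_univ _

lemma rankOf_lt_rankOf {v : ι → α} {j j' : ι} (h : v j < v j') : rankOf v j < rankOf v j' := by
  have hsub : ({i | v i ≤ v j} : Finset ι) ⊆ ({i | v i ≤ v j'} : Finset ι) := by
    intro i
    simpa using fun hi => hi.trans h.le
  refine card_lt_card ((ssubset_iff_of_subset hsub).2 ⟨j', ?_, ?_⟩) <;> simp [h]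

lemma rankOf_injective {v : ι → α} (hv : Injective v) : Injective (rankOf v) := by
  intro j j' h
  by_contra hne
  rcases (hv.ne hne).lt_or_gt with hlt | hlt
  · exact (rankOf_lt_rankOf hlt).ne h
  · exact (rankOf_lt_rankOf hlt).ne' h

lemma exists_rankOf_eq {v : ι → α} (hv : Injective v) {k : ℕ} (hk₁ : 1 ≤ k)
    (hk₂ : k ≤ Fintype.card ι) : ∃ j, rankOf v j = k := by
  have himage : univ.image (rankOf v) = Icc 1 (Fintype.card ι) := by
    refine eq_of_subset_of_card_le (fun r hr => ?_) ?_
    · obtain ⟨j, -, rfl⟩ := mem_image.1 hr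
      exact mem_Icc.2 ⟨one_le_rankOf v j, rankOf_le_card v j⟩
    · simp [card_image_of_injective _ (rankOf_injective hv)]
  obtain ⟨j, -, hj⟩ := mem_image.1 (himage ▸ mem_Icc.2 ⟨hk₁, hk₂⟩)
  exact ⟨j, hj⟩

end Rank

lemma ae_injective_of_measure_eq_zero {Ω ι α : Type*} [MeasurableSpace Ω] {P : Measure Ω}
    [Countable ι] {Z : ι → Ω → α}
    (hdistinct : ∀ i j : ι, i ≠ j → P {ω | Z i ω = Z j ω} = 0) :
    ∀ᵐ ω ∂P, Injective (Z · ω) := by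
  refine ae_all_iff.2 fun i => ae_all_iff.2 fun j => ?_
  rcases eq_or_ne i j with rfl | hij
  · exact ae_of_all _ fun _ _ => rfl
  · exact measure_mono_null (fun ω hω => (Classical.not_imp.1 hω).1) (hdistinct i j hij)

section Exchangeable

variable {Ω ι α : Type*} [MeasurableSpace Ω] {P : Measure Ω} [Fintype ι]
  [LinearOrder α] [TopologicalSpace α] [OrderClosedTopology α] [SecondCountableTopology α]
  [MeasurableSpace α] [OpensMeasurableSpace α]

lemma measurable_rankOf (j : ι) : Measurable fun v : ι → α => rankOf v j := by
  simp only [rankOf, card_filter]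
  exact Finset.measurable_sum _ fun i _ => Measurable.ite
    (measurableSet_le (measurable_pi_apply i) (measurable_pi_apply j))
    measurable_const measurable_const

lemma measure_rankOf_eq_of_exchangeable {Z : ι → Ω → α} (hZ : ∀ i, Measurable (Z i))
    (hexch : ∀ σ : Equiv.Perm ι,
      Measure.map (fun ω => fun i => Z (σ i) ω) P = Measure.map (fun ω => fun i => Z i ω) P)
    (k : ℕ) (j j' : ι) :
    P {ω | rankOf (Z · ω) j = k} = P {ω | rankOf (Z · ω) j' = k} := by
  classical
  set σ := Equiv.swap j j'
  have hσ : ∀ ω, rankOf (fun i => Z (σ i) ω) j' = rankOf (Z · ω) j := fun ω =>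
    (rankOf_comp_perm (Z · ω) σ j').trans (by rw [Equiv.swap_apply_right])
  have hS : MeasurableSet {v : ι → α | rankOf v j' = k} :=
    measurable_rankOf j' (measurableSet_singleton k)
  calc P {ω | rankOf (Z · ω) j = k}
      = Measure.map (fun ω => fun i => Z (σ i) ω) P {v | rankOf v j' = k} := by
        rw [Measure.map_apply (measurable_pi_lambda _ fun i => hZ (σ i)) hS]
        congr 1
        ext ω
        exact iff_of_eq (congrArg (· = k) (hσ ω).symm)
    _ = P {ω | rankOf (Z · ω) j' = k} := by
        rw [hexch, Measure.map_apply (measurable_pi_lambda _ hZ) hS]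
        rfl

theorem measure_rankOf_eq_inv_card [IsProbabilityMeasure P] {Z : ι → Ω → α}
    (hZ : ∀ i, Measurable (Z i))
    (hexch : ∀ σ : Equiv.Perm ι,
      Measure.map (fun ω => fun i => Z (σ i) ω) P = Measure.map (fun ω => fun i => Z i ω) P)
    (hdistinct : ∀ i j : ι, i ≠ j → P {ω | Z i ω = Z j ω} = 0)
    {k : ℕ} (hk₁ : 1 ≤ k) (hk₂ : k ≤ Fintype.card ι) (j : ι) :
    P {ω | rankOf (Z · ω) j = k} = (Fintype.card ι : ℝ≥0∞)⁻¹ := by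
  set E : ι → Set Ω := fun j => {ω | rankOf (Z · ω) j = k}
  have hnull : P {ω | ¬Injective (Z · ω)} = 0 :=
    ae_iff.1 (ae_injective_of_measure_eq_zero hdistinct)
  have hE : ∀ j, MeasurableSet (E j) := fun j =>
    (measurable_rankOf j).comp (measurable_pi_lambda _ hZ) (measurableSet_singleton k)
  have hdisj : Pairwise (AEDisjoint P on E) := fun j j' hne =>
    measure_mono_null (fun ω hω hinj => hne (rankOf_injective hinj (hω.1.trans hω.2.symm))) hnull
  have hcover : P (⋃ j, E j) = 1 := by
    refine (measure_congr (ae_eq_univ.2 (measure_mono_null (fun ω hnot hinj => ?_) hnull))).trans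
      measure_univ
    obtain ⟨j, hj⟩ := exists_rankOf_eq hinj hk₁ hk₂
    exact hnot (Set.mem_iUnion.2 ⟨j, hj⟩)
  have hsum : ∑ j', P (E j') = 1 := by
    rw [← tsum_fintype (L := SummationFilter.unconditional _),
      ← measure_iUnion₀ hdisj fun j => (hE j).nullMeasurableSet, hcover]
  refine ENNReal.eq_inv_of_mul_eq_one_left ?_
  rwa [Finset.sum_congr rfl fun j' _ => measure_rankOf_eq_of_exchangeable hZ hexch k j' j,
    sum_const, nsmul_eq_mul, mul_comm] at hsum

end Exchangeable

/-- Rank uniformity: if `Z 0, ..., Z n` are exchangeable real random variables that are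
almost surely pairwise distinct, then the rank `#{i : Z i ≤ Z (n+1)}` of the last variable
is uniformly distributed on `{1, ..., n+1}`. -/
theorem stmt12 {Ω : Type*} [MeasurableSpace Ω] (P : Measure Ω) [IsProbabilityMeasure P]
    (n : ℕ) (Z : Fin (n + 1) → Ω → ℝ) (hZ : ∀ i, Measurable (Z i))
    (hexch : ∀ σ : Equiv.Perm (Fin (n + 1)),
      Measure.map (fun ω => fun i => Z (σ i) ω) P = Measure.map (fun ω => fun i => Z i ω) P)
    (hdistinct : ∀ i j : Fin (n + 1), i ≠ j → P {ω | Z i ω = Z j ω} = 0)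
    (rank : Ω → ℕ)
    (hrank : ∀ ω, rank ω =
      (Finset.univ.filter fun i : Fin (n + 1) => Z i ω ≤ Z (Fin.last n) ω).card) :
    ∀ k : ℕ, 1 ≤ k → k ≤ n + 1 → P {ω | rank ω = k} = 1 / (n + 1) := by
  intro k hk₁ hk₂
  have hrank' : {ω | rank ω = k} = {ω | rankOf (Z · ω) (Fin.last n) = k} := by
    ext ω
    exact iff_of_eq (congrArg (· = k) (hrank ω))
  rw [hrank', measure_rankOf_eq_inv_card hZ hexch hdistinct hk₁ (by simpa using hk₂), one_div]
  simp
end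

section
/- Exact validity of the conformal p-value under distinctness: if the nonconformity scores α_1,...,α_{n+1} are exchangeable and almost surely pairwise distinct, then the conformal p-value p = (#{i : α_i ≥ α_{n+1}})/(n+1) is uniformly distributed on {1/(n+1), 2/(n+1), ..., 1}, so P(p ≤ ε) = ⌊ε(n+1)⌋/(n+1) for ε ∈ (0,1). -/
open MeasureTheory ProbabilityTheory
open scoped ENNReal

/-- Exact validity of the conformal p-value under distinctness: if the nonconformity scores
`α 0, ..., α n` are exchangeable and a.s. pairwise distinct, then the conformal p-value
`p = #{i : α i ≥ α (n+1)} / (n+1)` is uniformly distributed on `{1/(n+1), ..., 1}`, so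
`P (p ≤ ε) = ⌊ε (n+1)⌋ / (n+1)` for every `ε ∈ (0,1)`. -/
theorem stmt13 {Ω : Type*} [MeasurableSpace Ω] (P : Measure Ω) [IsProbabilityMeasure P]
    (n : ℕ) (α : Fin (n + 1) → Ω → ℝ) (hα : ∀ i, Measurable (α i))
    (hexch : ∀ σ : Equiv.Perm (Fin (n + 1)),
      Measure.map (fun ω => fun i => α (σ i) ω) P = Measure.map (fun ω => fun i => α i ω) P)
    (hdistinct : ∀ i j : Fin (n + 1), i ≠ j → P {ω | α i ω = α j ω} = 0)
    (p : Ω → ℝ)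
    (hp : ∀ ω, p ω =
      ((Finset.univ.filter fun i : Fin (n + 1) => α (Fin.last n) ω ≤ α i ω).card : ℝ)
        / (n + 1)) :
    (∀ k : ℕ, 1 ≤ k → k ≤ n + 1 → P {ω | p ω = k / (n + 1)} = 1 / (n + 1))
    ∧
    (∀ ε : ℝ, ε ∈ Set.Ioo (0 : ℝ) 1 →
      P {ω | p ω ≤ ε} = ENNReal.ofReal (↑⌊ε * (n + 1)⌋ / (n + 1))) := by
  classical
  -- the rank function
  set N : Fin (n + 1) → Ω → ℕ := fun j ω =>
    (Finset.univ.filter fun i : Fin (n + 1) => α j ω ≤ α i ω).card with hN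
  have hNmeasfun : ∀ j, Measurable (N j) := by
    intro j
    have : N j = fun ω => ∑ i : Fin (n + 1), if α j ω ≤ α i ω then 1 else 0 := by
      funext ω; exact Finset.card_filter _ _
    rw [this]
    exact Finset.measurable_sum _ fun i _ =>
      Measurable.ite (measurableSet_le (hα j) (hα i)) measurable_const measurable_const
  have hNmeas : ∀ j k, MeasurableSet {ω | N j ω = k} := fun j k =>
    hNmeasfun j (measurableSet_singleton k)
  have hN1 : ∀ j ω, 1 ≤ N j ω := by
    intro j ω
    exact Finset.card_pos.mpr ⟨j, by simp [hN]⟩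
  have hNle : ∀ j ω, N j ω ≤ n + 1 := by
    intro j ω
    calc N j ω ≤ (Finset.univ : Finset (Fin (n + 1))).card := Finset.card_filter_le _ _
      _ = n + 1 := by simp
  -- exchangeability: all ranks have the same law
  have hsame : ∀ j k, P {ω | N j ω = k} = P {ω | N (Fin.last n) ω = k} := by
    intro j k
    set g : (Fin (n + 1) → ℝ) → ℕ := fun f =>
      (Finset.univ.filter fun i => f (Fin.last n) ≤ f i).card with hg
    have hgmeas : Measurable g := by
      have : g = fun f => ∑ i : Fin (n + 1), if f (Fin.last n) ≤ f i then 1 else 0 := by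
        funext f; exact Finset.card_filter _ _
      rw [this]
      exact Finset.measurable_sum _ fun i _ =>
        Measurable.ite (measurableSet_le (measurable_pi_apply _) (measurable_pi_apply _))
          measurable_const measurable_const
    have hS : MeasurableSet {f : Fin (n + 1) → ℝ | g f = k} :=
      hgmeas (measurableSet_singleton k)
    set σ := Equiv.swap (Fin.last n) j with hσ
    have hFmeas : Measurable (fun ω => fun i : Fin (n + 1) => α i ω) :=
      measurable_pi_lambda _ hα
    have hFσmeas : Measurable (fun ω => fun i : Fin (n + 1) => α (σ i) ω) :=
      measurable_pi_lambda _ (fun i => hα (σ i))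
    have hcard : ∀ ω (c : ℝ),
        (Finset.univ.filter fun i => c ≤ α (σ i) ω).card
          = (Finset.univ.filter fun i => c ≤ α i ω).card := by
      intro ω c
      refine Finset.card_bij' (fun i _ => σ i) (fun i _ => σ.symm i) ?_ ?_ ?_ ?_
      · intro i hi; simp only [Finset.mem_filter, Finset.mem_univ, true_and] at hi ⊢; exact hi
      · intro i hi; simp only [Finset.mem_filter, Finset.mem_univ, true_and] at hi ⊢
        simpa using hi
      · intro i _; simp
      · intro i _; simp
    have h1 : {ω | N j ω = k} = (fun ω => fun i => α (σ i) ω) ⁻¹' {f | g f = k} := by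
      ext ω
      have hc : (Finset.univ.filter fun i => α (σ (Fin.last n)) ω ≤ α (σ i) ω).card
          = (Finset.univ.filter fun i => α j ω ≤ α i ω).card := by
        have hσl : σ (Fin.last n) = j := Equiv.swap_apply_left _ _
        rw [hσl]
        exact hcard ω (α j ω)
      show N j ω = k ↔ g (fun i => α (σ i) ω) = k
      have hgeq : g (fun i => α (σ i) ω) = N j ω := hc
      rw [hgeq]
    have h2 : {ω | N (Fin.last n) ω = k} = (fun ω => fun i => α i ω) ⁻¹' {f | g f = k} := rfl
    rw [h1, h2, ← Measure.map_apply hFσmeas hS, ← Measure.map_apply hFmeas hS, hexch σ]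
  -- the distinctness event
  set D : Set Ω := {ω | ∀ i j : Fin (n + 1), i ≠ j → α i ω ≠ α j ω} with hDdef
  have hDm : MeasurableSet D := by
    have : D = ⋂ (i : Fin (n + 1)) (j : Fin (n + 1)) (_ : i ≠ j), {ω | α i ω = α j ω}ᶜ := by
      ext ω; simp [hDdef, Set.mem_iInter]
    rw [this]
    exact MeasurableSet.iInter fun i => MeasurableSet.iInter fun j =>
      MeasurableSet.iInter fun _ => (measurableSet_eq_fun (hα i) (hα j)).compl
  have hDc : P Dᶜ = 0 := by
    have hsub : Dᶜ ⊆ ⋃ (i : Fin (n + 1)) (j : Fin (n + 1)) (_ : i ≠ j), {ω | α i ω = α j ω} := by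
      intro ω hω
      simp only [hDdef, Set.mem_compl_iff, Set.mem_setOf_eq, not_forall] at hω
      obtain ⟨i, j, hij, h⟩ := hω
      simp only [Set.mem_iUnion]
      exact ⟨i, j, hij, by simpa using h⟩
    refine measure_mono_null hsub ?_
    refine measure_iUnion_null fun i => measure_iUnion_null fun j => measure_iUnion_null fun h =>
      hdistinct i j h
  have hD1 : P D = 1 := by
    have h1 : (1 : ℝ≥0∞) ≤ P D := by
      have := measure_union_le (μ := P) D Dᶜ
      rw [Set.union_compl_self, measure_univ, hDc, add_zero] at this
      exact this
    exact le_antisymm prob_le_one h1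
  -- on D, ranks are injective
  have hmono : ∀ ω (j j' : Fin (n + 1)), α j ω < α j' ω → N j' ω < N j ω := by
    intro ω j j' hlt
    apply Finset.card_lt_card
    have hsub : (Finset.univ.filter fun i => α j' ω ≤ α i ω)
        ⊆ (Finset.univ.filter fun i => α j ω ≤ α i ω) := by
      intro i hi
      simp only [Finset.mem_filter, Finset.mem_univ, true_and] at hi ⊢
      linarith
    rw [Finset.ssubset_iff_of_subset hsub]
    exact ⟨j, by simp, by simp [not_le.mpr hlt]⟩
  have hinj : ∀ ω ∈ D, Function.Injective fun j => N j ω := by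
    intro ω hω j j' hjj'
    by_contra hne
    have hne' : α j ω ≠ α j' ω := hω j j' hne
    simp only at hjj'
    rcases lt_or_gt_of_ne hne' with h | h
    · exact absurd hjj' (ne_of_gt (hmono ω j j' h))
    · exact absurd hjj' (ne_of_lt (hmono ω j' j h))
  -- on D, every rank in [1, n+1] is attained
  have hexist : ∀ ω ∈ D, ∀ k : ℕ, 1 ≤ k → k ≤ n + 1 → ∃ j, N j ω = k := by
    intro ω hω k hk1 hk2
    set g : Fin (n + 1) → Fin (n + 1) := fun j =>
      ⟨N j ω - 1, by have h1 := hN1 j ω; have h2 := hNle j ω; omega⟩ with hgdef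
    have hginj : Function.Injective g := by
      intro a b hab
      apply hinj ω hω
      have := Fin.mk.injEq _ _ _ _ ▸ hab
      simp only [hgdef, Fin.mk.injEq] at hab
      have h1 := hN1 a ω; have h2 := hN1 b ω
      simp only; omega
    have hgsurj : Function.Surjective g := Finite.surjective_of_injective hginj
    obtain ⟨j, hj⟩ := hgsurj ⟨k - 1, by omega⟩
    refine ⟨j, ?_⟩
    have := Fin.mk.injEq _ _ _ _ ▸ hj
    simp only [hgdef, Fin.mk.injEq] at hj
    have h1 := hN1 j ω
    omega
  -- the key uniform-distribution statement
  have hkey : ∀ k : ℕ, 1 ≤ k → k ≤ n + 1 →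
      P {ω | N (Fin.last n) ω = k} = 1 / (n + 1) := by
    intro k hk1 hk2
    have hsum : ∑ j : Fin (n + 1), P ({ω | N j ω = k} ∩ D) = 1 := by
      rw [← measure_biUnion_finset]
      · have : (⋃ j ∈ (Finset.univ : Finset (Fin (n + 1))), ({ω | N j ω = k} ∩ D)) = D := by
          ext ω
          simp only [Set.mem_iUnion, Finset.mem_univ, Set.mem_inter_iff, Set.mem_setOf_eq,
            exists_prop, true_and]
          constructor
          · rintro ⟨j, _, hωD⟩; exact hωD
          · intro hωD
            obtain ⟨j, hj⟩ := hexist ω hωD k hk1 hk2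
            exact ⟨j, hj, hωD⟩
        rw [this, hD1]
      · intro j _ j' _ hne
        refine Set.disjoint_left.mpr ?_
        rintro ω ⟨hj, hωD⟩ ⟨hj', _⟩
        exact hne (hinj ω hωD (hj.trans hj'.symm))
      · intro j _
        exact (hNmeas j k).inter hDm
    have hfull : ∀ j, P ({ω | N j ω = k} ∩ D) = P {ω | N j ω = k} := fun j =>
      measure_inter_conull hDc
    have hsum2 : ∑ j : Fin (n + 1), P {ω | N j ω = k} = 1 := by
      rw [← hsum]; exact Finset.sum_congr rfl fun j _ => (hfull j).symm
    have hsum3 : ((n : ℝ≥0∞) + 1) * P {ω | N (Fin.last n) ω = k} = 1 := by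
      calc ((n : ℝ≥0∞) + 1) * P {ω | N (Fin.last n) ω = k}
          = ∑ _j : Fin (n + 1), P {ω | N (Fin.last n) ω = k} := by
            rw [Finset.sum_const, Finset.card_univ, Fintype.card_fin, nsmul_eq_mul]
            push_cast; ring
        _ = ∑ j : Fin (n + 1), P {ω | N j ω = k} :=
            Finset.sum_congr rfl fun j _ => (hsame j k).symm
        _ = 1 := hsum2
    rw [ENNReal.eq_div_iff (by simp) (by simp)]
    exact hsum3
  -- translate between p and N
  have hplevel : ∀ k : ℕ, {ω | p ω = k / (n + 1)} = {ω | N (Fin.last n) ω = k} := by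
    intro k
    ext ω
    have hpos : (0 : ℝ) < n + 1 := by positivity
    simp only [Set.mem_setOf_eq, hp ω, hN]
    rw [div_eq_div_iff (ne_of_gt hpos) (ne_of_gt hpos)]
    constructor
    · intro h
      have := mul_right_cancel₀ (ne_of_gt hpos) h
      exact_mod_cast this
    · intro h; rw [h]
  refine ⟨?_, ?_⟩
  · intro k hk1 hk2
    rw [hplevel k]
    exact hkey k hk1 hk2
  · intro ε hε
    obtain ⟨hε0, hε1⟩ := hε
    have hpos : (0 : ℝ) < n + 1 := by positivity
    set m : ℤ := ⌊ε * (n + 1)⌋ with hm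
    have hm0 : 0 ≤ m := Int.floor_nonneg.mpr (by positivity)
    have hmn : m ≤ n := by
      have h1 : ε * (n + 1) < ((n : ℤ) + 1 : ℤ) := by push_cast; nlinarith
      have := Int.floor_lt.mpr h1
      omega
    set M : ℕ := m.toNat with hM
    have hMm : (M : ℤ) = m := Int.toNat_of_nonneg hm0
    have hMn : M ≤ n := by omega
    -- the event {p ≤ ε} is {N last ≤ M}
    have hev : {ω | p ω ≤ ε} = {ω | N (Fin.last n) ω ≤ M} := by
      ext ω
      simp only [Set.mem_setOf_eq, hp ω]
      rw [div_le_iff₀ hpos]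
      constructor
      · intro h
        have h2 : ((N (Fin.last n) ω : ℤ) : ℝ) ≤ ε * (n + 1) := by push_cast; exact h
        have := Int.le_floor.mpr h2
        omega
      · intro h
        have h2 : (N (Fin.last n) ω : ℤ) ≤ m := by omega
        have h3 := Int.le_floor.mp h2
        push_cast at h3
        exact h3
    -- decompose as a disjoint union over levels
    have hev2 : {ω | N (Fin.last n) ω ≤ M}
        = ⋃ k ∈ Finset.Icc 1 M, {ω | N (Fin.last n) ω = k} := by
      ext ω
      simp only [Set.mem_setOf_eq, Set.mem_iUnion, Finset.mem_Icc, exists_prop]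
      constructor
      · intro h
        exact ⟨N (Fin.last n) ω, ⟨hN1 _ ω, h⟩, rfl⟩
      · rintro ⟨k, ⟨_, hk2⟩, hk⟩; omega
    have hmeasu : P {ω | p ω ≤ ε} = ∑ k ∈ Finset.Icc 1 M, P {ω | N (Fin.last n) ω = k} := by
      rw [hev, hev2]
      apply measure_biUnion_finset
      · intro k _ k' _ hne
        refine Set.disjoint_left.mpr ?_
        rintro ω hk hk'
        exact hne (hk.symm.trans hk')
      · intro k _
        exact hNmeas _ k
    rw [hmeasu]
    have hterm : ∀ k ∈ Finset.Icc 1 M, P {ω | N (Fin.last n) ω = k} = 1 / ((n : ℝ≥0∞) + 1) := by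
      intro k hk
      rw [Finset.mem_Icc] at hk
      exact hkey k hk.1 (by omega)
    rw [Finset.sum_congr rfl hterm, Finset.sum_const, Nat.card_Icc]
    simp only [Nat.add_sub_cancel]
    -- now: M • (1 / (n+1)) = ENNReal.ofReal (m / (n+1))
    have hrhs : (ENNReal.ofReal ((m : ℝ) / (n + 1)))
        = (M : ℝ≥0∞) * (1 / ((n : ℝ≥0∞) + 1)) := by
      rw [ENNReal.ofReal_div_of_pos hpos]
      have h1 : ENNReal.ofReal ((m : ℝ)) = (M : ℝ≥0∞) := by
        rw [show ((m : ℝ)) = ((M : ℕ) : ℝ) by exact_mod_cast hMm.symm]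
        exact ENNReal.ofReal_natCast M
      have h2 : ENNReal.ofReal ((n : ℝ) + 1) = (n : ℝ≥0∞) + 1 := by
        rw [show ((n : ℝ) + 1) = ((n + 1 : ℕ) : ℝ) by push_cast; ring]
        rw [ENNReal.ofReal_natCast]
        push_cast; ring
      rw [h1, h2, one_div, div_eq_mul_inv]
    rw [hrhs, nsmul_eq_mul]
end

section
/- Lower bound on conformal coverage: under exchangeability and almost sure distinctness of nonconformity scores, the conformal prediction set at level ε has coverage probability exactly 1 − ⌊ε(n+1)⌋/(n+1), which lies in [1 − ε, 1 − ε + 1/(n+1)]. -/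
/-!
The conformal p-value is `R / (n + 1)`, where `R` is the rank of the test score counted from
the top. When the scores are a.s. distinct, the ranks form a permutation of `1, …, n + 1`, and
exchangeability makes every coordinate equally likely to hold any given rank; hence `R` is
uniform on `{1, …, n + 1}`. The prediction set errs iff `R ≤ ⌊ε (n + 1)⌋`, which has probability
`⌊ε (n + 1)⌋ / (n + 1)`, and the floor bounds give the interval.
-/

open MeasureTheory ProbabilityTheory Finset
open scoped ENNReal

section UpperRank

variable {ι β : Type*} [Fintype ι] [LinearOrder β]

/-- Ranks are counted from the top: the largest score has rank `1`. -/
def upperRank (j : ι) (x : ι → β) : ℕ := #{i | x j ≤ x i}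

lemma upperRank_comp_perm (σ : Equiv.Perm ι) (j : ι) (x : ι → β) :
    upperRank j (x ∘ σ) = upperRank (σ j) x :=
  card_equiv σ fun i => by simp

lemma one_le_upperRank (j : ι) (x : ι → β) : 1 ≤ upperRank j x :=
  card_pos.2 ⟨j, by simp⟩

lemma upperRank_le_card (j : ι) (x : ι → β) : upperRank j x ≤ Fintype.card ι :=
  card_filter_le _ _

lemma upperRank_lt_upperRank {x : ι → β} {j j' : ι} (h : x j < x j') :
    upperRank j' x < upperRank j x := by
  refine card_lt_card ⟨fun i hi => ?_, fun hsub => ?_⟩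
  · simp only [mem_filter, mem_univ, true_and] at hi ⊢
    exact h.le.trans hi
  · exact h.not_ge (by simpa using hsub (by simp : j ∈ ({i | x j ≤ x i} : Finset ι)))

lemma upperRank_injective {x : ι → β} (hx : Function.Injective x) :
    Function.Injective fun j => upperRank j x := by
  intro j j' h
  by_contra hne
  rcases (hx.ne hne).lt_or_gt with hlt | hgt
  · exact (upperRank_lt_upperRank hlt).ne' h
  · exact (upperRank_lt_upperRank hgt).ne h

lemma image_upperRank {x : ι → β} (hx : Function.Injective x) :
    univ.image (fun j => upperRank j x) = Icc 1 (Fintype.card ι) := by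
  refine eq_of_subset_of_card_le (fun k hk => ?_) ?_
  · obtain ⟨j, -, rfl⟩ := mem_image.1 hk
    exact mem_Icc.2 ⟨one_le_upperRank j x, upperRank_le_card j x⟩
  · rw [card_image_of_injective _ (upperRank_injective hx), Nat.card_Icc, card_univ,
      Nat.add_sub_cancel]

lemma existsUnique_upperRank_eq {x : ι → β} (hx : Function.Injective x) {k : ℕ}
    (hk : k ∈ Icc 1 (Fintype.card ι)) : ∃! j, upperRank j x = k := by
  rw [← image_upperRank hx, mem_image] at hk
  obtain ⟨j, -, hj⟩ := hk
  exact ⟨j, hj, fun j' hj' => upperRank_injective hx (hj'.trans hj.symm)⟩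

variable [TopologicalSpace β] [OrderClosedTopology β] [SecondCountableTopology β]
  [MeasurableSpace β] [OpensMeasurableSpace β]

lemma measurable_upperRank (j : ι) : Measurable fun x : ι → β => upperRank j x := by
  simp only [upperRank, card_filter]
  exact Finset.measurable_sum _ fun i _ =>
    Measurable.ite (measurableSet_le (measurable_pi_apply j) (measurable_pi_apply i))
      measurable_const measurable_const

end UpperRank

section Exchangeable

variable {Ω ι β : Type*} [MeasurableSpace Ω] [Fintype ι] [LinearOrder β]
  {P : Measure Ω} {X : Ω → ι → β}

lemma ae_injective_of_pairwise_measure_eq_zero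
    (h : ∀ i j, i ≠ j → P {ω | X ω i = X ω j} = 0) : ∀ᵐ ω ∂P, Function.Injective (X ω) := by
  have hpair : ∀ᵐ ω ∂P, ∀ i j, i ≠ j → X ω i ≠ X ω j := by
    simp only [ae_all_iff]
    intro i j
    by_cases hij : i = j
    · simp [hij]
    · simpa [ae_iff, hij] using h i j hij
  filter_upwards [hpair] with ω hω i j hij
  by_contra hne
  exact hω i j hne hij

variable [TopologicalSpace β] [OrderClosedTopology β] [SecondCountableTopology β]
  [MeasurableSpace β] [OpensMeasurableSpace β]

lemma measure_upperRank_perm_eq (hX : Measurable X)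
    (hexch : ∀ σ : Equiv.Perm ι, P.map (fun ω => X ω ∘ σ) = P.map X)
    (σ : Equiv.Perm ι) (j : ι) (k : ℕ) :
    P {ω | upperRank (σ j) (X ω) = k} = P {ω | upperRank j (X ω) = k} := by
  have hS : MeasurableSet {x : ι → β | upperRank j x = k} :=
    measurable_upperRank j (measurableSet_singleton k)
  have hXσ : Measurable fun ω => X ω ∘ σ :=
    measurable_pi_lambda _ fun i => (measurable_pi_apply (σ i)).comp hX
  have h := congrArg (· {x | upperRank j x = k}) (hexch σ)
  simp only [Measure.map_apply hXσ hS, Measure.map_apply hX hS] at h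
  simpa [upperRank_comp_perm] using h

variable [IsProbabilityMeasure P]

-- Almost surely exactly one coordinate has rank `k`, and these events are a.e. disjoint.
lemma sum_measure_upperRank_eq_one (hX : Measurable X)
    (hinj : ∀ᵐ ω ∂P, Function.Injective (X ω)) {k : ℕ} (hk : k ∈ Icc 1 (Fintype.card ι)) :
    ∑ j, P {ω | upperRank j (X ω) = k} = 1 := by
  rw [← measure_biUnion_finset₀]
  · refine (measure_congr (Filter.eventuallyEq_univ.2 ?_)).trans measure_univ
    filter_upwards [hinj] with ω hω
    simpa using (existsUnique_upperRank_eq hω hk).exists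
  · refine fun j _ j' _ hne => measure_mono_null (fun ω hω => ?_) (ae_iff.1 hinj)
    intro hinjω
    exact hne (upperRank_injective hinjω (hω.1.trans hω.2.symm))
  · exact fun j _ =>
      ((measurable_upperRank j).comp hX (measurableSet_singleton k)).nullMeasurableSet

lemma measure_upperRank_eq (hX : Measurable X)
    (hexch : ∀ σ : Equiv.Perm ι, P.map (fun ω => X ω ∘ σ) = P.map X)
    (hinj : ∀ᵐ ω ∂P, Function.Injective (X ω)) (j : ι) {k : ℕ}
    (hk : k ∈ Icc 1 (Fintype.card ι)) :
    P {ω | upperRank j (X ω) = k} = (Fintype.card ι : ℝ≥0∞)⁻¹ := by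
  classical
  have hsum := sum_measure_upperRank_eq_one hX hinj hk
  rw [sum_congr rfl fun j' _ => by
      simpa using measure_upperRank_perm_eq hX hexch (Equiv.swap j j') j k,
    sum_const, card_univ, nsmul_eq_mul] at hsum
  exact ENNReal.eq_inv_of_mul_eq_one_left (by rwa [mul_comm])

lemma measure_upperRank_le (hX : Measurable X)
    (hexch : ∀ σ : Equiv.Perm ι, P.map (fun ω => X ω ∘ σ) = P.map X)
    (hinj : ∀ᵐ ω ∂P, Function.Injective (X ω)) (j : ι) {m : ℕ}
    (hm : m ≤ Fintype.card ι) :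
    P {ω | upperRank j (X ω) ≤ m} = m / Fintype.card ι := by
  have hset : {ω | upperRank j (X ω) ≤ m} = (fun ω => upperRank j (X ω)) ⁻¹' ↑(Icc 1 m) := by
    ext ω
    simp [one_le_upperRank]
  rw [hset, ← sum_measure_preimage_singleton]
  · change ∑ k ∈ Icc 1 m, P {ω | upperRank j (X ω) = k} = _
    rw [sum_congr rfl fun k hk => measure_upperRank_eq hX hexch hinj j
      (Icc_subset_Icc_right hm hk), sum_const, Nat.card_Icc, nsmul_eq_mul,
      Nat.add_sub_cancel, div_eq_mul_inv]
  · exact fun k _ => (measurable_upperRank j).comp hX (measurableSet_singleton k)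

end Exchangeable

section Floor

variable {K : Type*} [Field K] [LinearOrder K] [IsStrictOrderedRing K] [FloorRing K]
  {N : K}

lemma floor_mul_div_le (x : K) (hN : 0 < N) : (⌊x * N⌋ : K) / N ≤ x :=
  (div_le_iff₀ hN).2 (Int.floor_le _)

lemma sub_one_div_lt_floor_mul_div (x : K) (hN : 0 < N) : x - 1 / N < (⌊x * N⌋ : K) / N := by
  rw [lt_div_iff₀ hN, sub_mul, one_div_mul_cancel hN.ne']
  exact Int.sub_one_lt_floor _

end Floor

/-- Lower bound on conformal coverage: for exchangeable, a.s. pairwise distinct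
nonconformity scores, the conformal prediction set at level `ε` (which errs exactly when
the p-value is `≤ ε`) has coverage probability exactly `1 − ⌊ε (n+1)⌋ / (n+1)`, a quantity
lying in `[1 − ε, 1 − ε + 1/(n+1)]`. -/
theorem stmt14 {Ω : Type*} [MeasurableSpace Ω] (P : Measure Ω) [IsProbabilityMeasure P]
    (n : ℕ) (α : Fin (n + 1) → Ω → ℝ) (hα : ∀ i, Measurable (α i))
    (hexch : ∀ σ : Equiv.Perm (Fin (n + 1)),
      Measure.map (fun ω => fun i => α (σ i) ω) P = Measure.map (fun ω => fun i => α i ω) P)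
    (hdistinct : ∀ i j : Fin (n + 1), i ≠ j → P {ω | α i ω = α j ω} = 0)
    (p : Ω → ℝ)
    (hp : ∀ ω, p ω =
      ((Finset.univ.filter fun i : Fin (n + 1) => α (Fin.last n) ω ≤ α i ω).card : ℝ)
        / (n + 1))
    (ε : ℝ) (hε : ε ∈ Set.Ioo (0 : ℝ) 1) :
    P {ω | ε < p ω} = ENNReal.ofReal (1 - ↑⌊ε * (n + 1)⌋ / (n + 1))
    ∧ 1 - ε ≤ 1 - (⌊ε * (n + 1)⌋ : ℝ) / (n + 1)
    ∧ 1 - (⌊ε * (n + 1)⌋ : ℝ) / (n + 1) ≤ 1 - ε + 1 / (n + 1) := by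
  obtain ⟨hε0, hε1⟩ := hε
  have hN : (0 : ℝ) < n + 1 := by positivity
  set X : Ω → Fin (n + 1) → ℝ := fun ω i => α i ω
  have hX : Measurable X := measurable_pi_lambda _ hα
  set m := ⌊ε * (n + 1)⌋₊
  have hfloor : (⌊ε * (n + 1)⌋ : ℝ) = m := (natCast_floor_eq_intCast_floor (by positivity)).symm
  have hm : m ≤ Fintype.card (Fin (n + 1)) := by
    rw [Fintype.card_fin]
    exact Nat.floor_le_of_le (by push_cast; nlinarith)
  have hevent : {ω | ε < p ω} = {ω | upperRank (Fin.last n) (X ω) ≤ m}ᶜ := by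
    ext ω
    simp only [Set.mem_ofPred_eq, Set.mem_compl_iff, not_le, hp, lt_div_iff₀ hN]
    exact (Nat.floor_lt (by positivity)).symm
  have hmeas : MeasurableSet {ω | upperRank (Fin.last n) (X ω) ≤ m} :=
    (measurable_upperRank _).comp hX measurableSet_Iic
  have hcoverage : P {ω | ε < p ω} = 1 - m / (n + 1) := by
    rw [hevent, prob_compl_eq_one_sub hmeas,
      measure_upperRank_le hX hexch (ae_injective_of_pairwise_measure_eq_zero hdistinct) _ hm,
      Fintype.card_fin, Nat.cast_add_one]
  refine ⟨?_, by linarith [floor_mul_div_le ε hN],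
    by linarith [sub_one_div_lt_floor_mul_div ε hN]⟩
  rw [hcoverage, hfloor, ENNReal.ofReal_sub _ (by positivity), ENNReal.ofReal_one,
    ENNReal.ofReal_div_of_pos hN]
  norm_cast
end

section
/- Impossibility of nontrivial object-conditional validity (finite-label toy version): let Y be a finite set with |Y| ≥ 2, let X be an uncountable standard Borel space, and let Γ be a set predictor that for every data-generating distribution R on X × Y satisfies P_R(y_{n+1} ∈ Γ | x_{n+1} = x) ≥ 1 − ε for R_X-almost every x with ε < 1/|Y|. Then for every atomless R_X and R_X-almost every test object x that, almost surely, does not appear among x_1,...,x_n, the predictor must output Γ = Y (the trivial full prediction set) with positive probability. -/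
/-!
Relabelling the data on a measurable set `S ∋ x` to a fixed label `y` moves the law of the `n`
training pairs by at most `n · RX S`, while validity at `x` under the relabelled kernel forces
`y ∈ Γ` with probability at least `1 - ε`. So under any kernel `y ∉ Γ` has probability at most
`ε + n · RX S`, and `RX S` can be made arbitrarily small because `RX` has no atoms; the sets `S` are
taken from a countable family (preimages of rational intervals under a Borel embedding into `ℝ`), so
one null set of bad `x` serves all of them. A union bound over the labels then leaves `Γ = Y` with
probability at least `1 - |Y| ε > 0`.
-/

open MeasureTheory ProbabilityTheory Set Function
open scoped ENNReal

theorem ENNReal.natCast_mul_ofReal_lt_one {N : ℕ} {ε : ℝ} (hε : ε < 1 / N) :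
    (N : ℝ≥0∞) * ENNReal.ofReal ε < 1 := by
  rcases le_or_gt ε 0 with hε0 | hε0
  · simp [ENNReal.ofReal_of_nonpos hε0]
  have hN : (0 : ℝ) < N := by
    by_contra! hN
    simp [le_antisymm hN N.cast_nonneg] at hε
    linarith
  rw [← ENNReal.ofReal_natCast, ← ENNReal.ofReal_mul N.cast_nonneg, ENNReal.ofReal_lt_one]
  rwa [lt_div_iff₀ hN, mul_comm] at hε

/- `s` need not be measurable (the prediction sets are arbitrary), so the lower integral on the
left is only an inner measure of `s`. -/
theorem measure_compl_le_of_one_sub_le_lintegral_indicator {α : Type*} [MeasurableSpace α]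
    {μ : Measure α} [IsProbabilityMeasure μ] {s : Set α} {c : ℝ≥0∞}
    (h : 1 - c ≤ ∫⁻ a, s.indicator 1 a ∂μ) : μ sᶜ ≤ c := by
  obtain ⟨g, hg, hgs, heq⟩ := exists_measurable_le_lintegral_eq μ (s.indicator 1)
  set V := {a | g a ≠ 0}
  have hV : MeasurableSet V := (measurableSet_singleton 0).compl.preimage hg
  have hVs : V ⊆ s := fun a ha => by
    by_contra has
    exact ha (le_antisymm ((hgs a).trans_eq (indicator_of_notMem has _)) zero_le)
  have hgV : g ≤ V.indicator 1 := fun a => by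
    by_cases ha : a ∈ V
    · rw [indicator_of_mem ha]
      exact (hgs a).trans (indicator_le_self' (fun _ _ => zero_le_one) a)
    · rw [indicator_of_notMem ha, show g a = 0 by simpa [V] using ha]
  have hμV : 1 - c ≤ μ V :=
    calc 1 - c ≤ ∫⁻ a, g a ∂μ := heq ▸ h
      _ ≤ ∫⁻ a, V.indicator 1 a ∂μ := lintegral_mono hgV
      _ = μ V := lintegral_indicator_one hV
  calc μ sᶜ ≤ μ Vᶜ := measure_mono (compl_subset_compl.2 hVs)
    _ = 1 - μ V := prob_compl_eq_one_sub hV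
    _ ≤ c := tsub_le_iff_tsub_le.1 hμV

theorem pos_of_measure_compl_lt_one {α : Type*} [MeasurableSpace α] {μ : Measure α}
    [IsProbabilityMeasure μ] {s : Set α} (h : μ sᶜ < 1) : 0 < μ s := by
  refine pos_iff_ne_zero.2 fun hs => h.not_ge ?_
  simpa [hs] using measure_univ_le_add_compl (μ := μ) s

theorem Real.exists_rat_mem_Ioo_measure_lt (ν : Measure ℝ) [IsFiniteMeasure ν] {r : ℝ}
    (hr : ν {r} = 0) {δ : ℝ≥0∞} (hδ : 0 < δ) :
    ∃ a b : ℚ, r ∈ Ioo (a : ℝ) b ∧ ν (Ioo (a : ℝ) b) < δ := by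
  have hlim := tendsto_measure_cthickening_of_isCompact (μ := ν) (isCompact_singleton (x := r))
  rw [hr] at hlim
  obtain ⟨ρ, hsmall, hρ⟩ := (((hlim.eventually (gt_mem_nhds hδ)).filter_mono
    nhdsWithin_le_nhds).and (self_mem_nhdsWithin : Ioi (0 : ℝ) ∈ nhdsWithin 0 (Ioi 0))).exists
  obtain ⟨a, ha⟩ := exists_rat_btwn (show r - ρ < r by linarith)
  obtain ⟨b, hb⟩ := exists_rat_btwn (show r < r + ρ by linarith)
  refine ⟨a, b, ⟨ha.2, hb.1⟩, (measure_mono ?_).trans_lt hsmall⟩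
  rw [Metric.cthickening_singleton _ hρ.le, Real.closedBall_eq_Icc]
  exact Ioo_subset_Icc_self.trans (Icc_subset_Icc ha.1.le hb.2.le)

theorem exists_measurableSet_family_mem_measure_lt {X : Type*} [MeasurableSpace X]
    [StandardBorelSpace X] (μ : Measure X) [IsFiniteMeasure μ] [NullSingletonClass μ] :
    ∃ S : ℚ × ℚ → Set X, (∀ i, MeasurableSet (S i)) ∧
      ∀ x (δ : ℝ≥0∞), 0 < δ → ∃ i, x ∈ S i ∧ μ (S i) < δ := by
  obtain ⟨f, hf⟩ := exists_measurableEmbedding_real X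
  refine ⟨fun i => f ⁻¹' Ioo (i.1 : ℝ) i.2, fun i => hf.measurable measurableSet_Ioo,
    fun x δ hδ => ?_⟩
  have hatom : μ.map f {f x} = 0 := by
    rw [hf.map_apply]
    exact (subsingleton_singleton.preimage hf.injective).measure_zero μ
  obtain ⟨a, b, hx, hab⟩ := Real.exists_rat_mem_Ioo_measure_lt (μ.map f) hatom hδ
  exact ⟨(a, b), hx, by rwa [hf.map_apply] at hab⟩

namespace MeasureTheory.Measure

theorem compProd_restrict_preimage_fst_congr {α β : Type*} [MeasurableSpace α]
    [MeasurableSpace β] (μ : Measure α) [SFinite μ] {κ η : Kernel α β} [IsSFiniteKernel κ]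
    [IsSFiniteKernel η] {T : Set α} (hT : MeasurableSet T) (h : EqOn κ η T) :
    (μ ⊗ₘ κ).restrict (Prod.fst ⁻¹' T) = (μ ⊗ₘ η).restrict (Prod.fst ⁻¹' T) := by
  ext B hB
  have hBT : MeasurableSet (B ∩ Prod.fst ⁻¹' T) := hB.inter (measurable_fst hT)
  rw [restrict_apply hB, restrict_apply hB, compProd_apply hBT, compProd_apply hBT]
  refine lintegral_congr fun x => ?_
  by_cases hx : x ∈ T
  · rw [h hx]
  · have hempty : Prod.mk x ⁻¹' (B ∩ Prod.fst ⁻¹' T) = ∅ := by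
      ext
      simp [hx]
    simp [hempty]

theorem pi_le_add_of_restrict_eq {ι α : Type*} [Fintype ι] [MeasurableSpace α]
    {μ ν : Measure α} [IsProbabilityMeasure μ] [IsProbabilityMeasure ν] {W : Set α}
    (hW : MeasurableSet W) (h : μ.restrict W = ν.restrict W) (A : Set (ι → α)) :
    Measure.pi (fun _ : ι => μ) A ≤ Measure.pi (fun _ : ι => ν) A + Fintype.card ι * μ Wᶜ := by
  set G : Set (ι → α) := univ.pi fun _ => W
  have hG : MeasurableSet G := .univ_pi fun _ => hW
  have hinside : Measure.pi (fun _ : ι => μ) (A ∩ G) ≤ Measure.pi (fun _ : ι => ν) A := by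
    rw [← restrict_apply' hG, restrict_pi_pi, h, ← restrict_pi_pi, restrict_apply' hG]
    exact measure_mono inter_subset_left
  have houtside : Measure.pi (fun _ : ι => μ) Gᶜ ≤ Fintype.card ι * μ Wᶜ := by
    have hGc : Gᶜ = ⋃ i, eval i ⁻¹' Wᶜ := by
      ext
      simp [G]
    calc Measure.pi (fun _ : ι => μ) Gᶜ ≤ ∑ i, Measure.pi (fun _ : ι => μ) (eval i ⁻¹' Wᶜ) :=
          hGc ▸ measure_iUnion_fintype_le _ _
      _ = ∑ _ : ι, μ Wᶜ := Finset.sum_congr rfl fun i _ =>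
          (measurePreserving_eval _ i).measure_preimage hW.compl.nullMeasurableSet
      _ = Fintype.card ι * μ Wᶜ := by simp
  calc Measure.pi (fun _ : ι => μ) A
      ≤ Measure.pi (fun _ : ι => μ) (A ∩ G) + Measure.pi (fun _ : ι => μ) (A \ G) :=
        measure_le_inter_add_sdiff _ _ _
    _ ≤ Measure.pi (fun _ : ι => ν) A + Fintype.card ι * μ Wᶜ :=
        add_le_add hinside ((measure_mono (sdiff_subset_compl A G)).trans houtside)

theorem pi_compProd_le_add_of_eqOn_compl {ι α β : Type*} [Fintype ι] [MeasurableSpace α]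
    [MeasurableSpace β] (μ : Measure α) [IsProbabilityMeasure μ] {κ η : Kernel α β}
    [IsMarkovKernel κ] [IsMarkovKernel η] {S : Set α} (hS : MeasurableSet S)
    (h : EqOn κ η Sᶜ) (A : Set (ι → α × β)) :
    Measure.pi (fun _ : ι => μ ⊗ₘ κ) A
      ≤ Measure.pi (fun _ : ι => μ ⊗ₘ η) A + Fintype.card ι * μ S := by
  have := pi_le_add_of_restrict_eq (measurable_fst hS.compl)
    (compProd_restrict_preimage_fst_congr μ hS.compl h) A
  rwa [← preimage_compl, compl_compl, ← fst_apply hS, fst_compProd] at this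

theorem pi_compProd_exists_fst_eq_eq_zero {ι α β : Type*} [Fintype ι] [MeasurableSpace α]
    [MeasurableSpace β] (μ : Measure α) [IsFiniteMeasure μ] [NullSingletonClass μ]
    (κ : Kernel α β) [IsMarkovKernel κ] (x : α) :
    Measure.pi (fun _ : ι => μ ⊗ₘ κ) {t | ∃ i, (t i).1 = x} = 0 := by
  have hfst : MeasurePreserving Prod.fst (μ ⊗ₘ κ) μ := ⟨measurable_fst, fst_compProd μ κ⟩
  have hx : (μ ⊗ₘ κ) (Prod.fst ⁻¹' {x}) = 0 :=
    hfst.quasiMeasurePreserving.preimage_null (measure_singleton x)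
  have hsub : {t : ι → α × β | ∃ i, (t i).1 = x} ⊆ ⋃ i, eval i ⁻¹' (Prod.fst ⁻¹' {x}) :=
    fun t ⟨i, hi⟩ => mem_iUnion.2 ⟨i, hi⟩
  exact measure_mono_null hsub (measure_iUnion_null fun i => pi_eval_preimage_null _ hx)

end MeasureTheory.Measure

namespace ProbabilityTheory.Kernel

variable {X Y : Type*} [MeasurableSpace X] [MeasurableSpace Y]

open scoped Classical in
noncomputable def relabel (κ : Kernel X Y) {S : Set X} (hS : MeasurableSet S) (y : Y) :
    Kernel X Y :=
  piecewise hS (const X (Measure.dirac y)) κ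

instance (κ : Kernel X Y) [IsMarkovKernel κ] {S : Set X} (hS : MeasurableSet S) (y : Y) :
    IsMarkovKernel (κ.relabel hS y) := by
  unfold relabel
  infer_instance

theorem relabel_apply_of_mem (κ : Kernel X Y) {S : Set X} (hS : MeasurableSet S) (y : Y)
    {x : X} (hx : x ∈ S) : κ.relabel hS y x = Measure.dirac y := by
  simp [relabel, piecewise_apply, hx]

theorem eqOn_relabel_compl (κ : Kernel X Y) {S : Set X} (hS : MeasurableSet S) (y : Y) :
    EqOn κ (κ.relabel hS y) Sᶜ := fun x hx => by
  simp [relabel, piecewise_apply, notMem_of_mem_compl hx]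

end ProbabilityTheory.Kernel

theorem measure_pi_compProd_notMem_le {ι X Y : Type*} [Fintype ι] [MeasurableSpace X]
    [MeasurableSpace Y] [MeasurableSingletonClass Y] (μ : Measure X) [IsProbabilityMeasure μ]
    (κ : Kernel X Y) [IsMarkovKernel κ] {S : Set X} (hS : MeasurableSet S) {x : X} (hx : x ∈ S)
    (C : (ι → X × Y) → Set Y) (y : Y) {c : ℝ≥0∞}
    (hvalid : 1 - c ≤ ∫⁻ t, κ.relabel hS y x (C t)
      ∂Measure.pi (fun _ : ι => μ ⊗ₘ κ.relabel hS y)) :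
    Measure.pi (fun _ : ι => μ ⊗ₘ κ) {t | y ∉ C t} ≤ c + Fintype.card ι * μ S := by
  calc Measure.pi (fun _ : ι => μ ⊗ₘ κ) {t | y ∉ C t}
      ≤ Measure.pi (fun _ : ι => μ ⊗ₘ κ.relabel hS y) {t | y ∈ C t}ᶜ + Fintype.card ι * μ S :=
        Measure.pi_compProd_le_add_of_eqOn_compl μ hS (κ.eqOn_relabel_compl hS y) _
    _ ≤ c + Fintype.card ι * μ S := by
      gcongr
      have hdirac : ∀ t, κ.relabel hS y x (C t) = {t | y ∈ C t}.indicator 1 t := fun t => by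
        rw [κ.relabel_apply_of_mem hS y hx, Measure.dirac_apply]
        by_cases hy : y ∈ C t <;> simp [hy]
      exact measure_compl_le_of_one_sub_le_lintegral_indicator (by simpa only [hdirac] using hvalid)

theorem ae_forall_measure_pi_compProd_notMem_le {ι X Y : Type*} [Fintype ι]
    [MeasurableSpace X] [StandardBorelSpace X] [Countable Y] [MeasurableSpace Y]
    [MeasurableSingletonClass Y] (Γ : (ι → X × Y) → X → Set Y) (μ : Measure X)
    [IsProbabilityMeasure μ] [NullSingletonClass μ] {c : ℝ≥0∞}
    (hvalid : ∀ κ : Kernel X Y, IsMarkovKernel κ →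
      ∀ᵐ x ∂μ, 1 - c ≤ ∫⁻ t, κ x (Γ t x) ∂Measure.pi (fun _ : ι => μ ⊗ₘ κ))
    (κ : Kernel X Y) [IsMarkovKernel κ] :
    ∀ᵐ x ∂μ, ∀ y, Measure.pi (fun _ : ι => μ ⊗ₘ κ) {t | y ∉ Γ t x} ≤ c := by
  obtain ⟨S, hS, hsmall⟩ := exists_measurableSet_family_mem_measure_lt μ
  have hrelabel : ∀ᵐ x ∂μ, ∀ p : (ℚ × ℚ) × Y, 1 - c ≤
      ∫⁻ t, κ.relabel (hS p.1) p.2 x (Γ t x)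
        ∂Measure.pi (fun _ : ι => μ ⊗ₘ κ.relabel (hS p.1) p.2) :=
    ae_all_iff.2 fun p => hvalid _ inferInstance
  filter_upwards [hrelabel] with x hx y
  refine ENNReal.le_of_forall_pos_le_add fun η hη _ => ?_
  obtain ⟨δ, hδ, hδη⟩ := ENNReal.exists_nnreal_pos_mul_lt
    (ENNReal.natCast_ne_top (Fintype.card ι)) (ENNReal.coe_ne_zero.2 hη.ne')
  obtain ⟨i, hxi, hi⟩ := hsmall x δ (ENNReal.coe_pos.2 hδ)
  calc Measure.pi (fun _ : ι => μ ⊗ₘ κ) {t | y ∉ Γ t x}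
      ≤ c + Fintype.card ι * μ (S i) :=
        measure_pi_compProd_notMem_le μ κ (hS i) hxi (fun t => Γ t x) y (hx (i, y))
    _ ≤ c + η := by
      gcongr
      calc (Fintype.card ι : ℝ≥0∞) * μ (S i) ≤ Fintype.card ι * δ := by gcongr
        _ ≤ η := by rw [mul_comm]; exact hδη.le

theorem stmt18_general {X Y : Type*} [MeasurableSpace X] [StandardBorelSpace X]
    [Fintype Y] [MeasurableSpace Y] [MeasurableSingletonClass Y]
    (n : ℕ) (ε : ℝ) (hεY : ε < 1 / Fintype.card Y)
    (Γ : (Fin n → X × Y) → X → Set Y)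
    (RX : Measure X) [IsProbabilityMeasure RX] (hRX : ∀ a : X, RX {a} = 0)
    (hvalid : ∀ Q : Kernel X Y, IsMarkovKernel Q →
      ∀ᵐ x ∂ RX,
        1 - ENNReal.ofReal ε ≤
          ∫⁻ t, Q x (Γ t x) ∂(Measure.pi fun _ : Fin n => RX.compProd Q)) :
    ∀ Q : Kernel X Y, IsMarkovKernel Q →
      ∀ᵐ x ∂ RX,
        (Measure.pi fun _ : Fin n => RX.compProd Q) {t | ∃ i, (t i).1 = x} = 0
        ∧ 0 < (Measure.pi fun _ : Fin n => RX.compProd Q) {t | Γ t x = Set.univ} := by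
  intro Q _
  have : NullSingletonClass RX := ⟨hRX⟩
  filter_upwards [ae_forall_measure_pi_compProd_notMem_le Γ RX hvalid Q] with x hx
  refine ⟨Measure.pi_compProd_exists_fst_eq_eq_zero RX Q x, pos_of_measure_compl_lt_one ?_⟩
  have hnotuniv : {t | Γ t x = univ}ᶜ = ⋃ y, {t | y ∉ Γ t x} := by
    ext
    simp [eq_univ_iff_forall]
  calc (Measure.pi fun _ : Fin n => RX.compProd Q) {t | Γ t x = univ}ᶜ
      ≤ ∑ y, (Measure.pi fun _ : Fin n => RX.compProd Q) {t | y ∉ Γ t x} :=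
        hnotuniv ▸ measure_iUnion_fintype_le _ _
    _ ≤ ∑ _ : Y, ENNReal.ofReal ε := Finset.sum_le_sum fun y _ => hx y
    _ = Fintype.card Y * ENNReal.ofReal ε := by simp
    _ < 1 := ENNReal.natCast_mul_ofReal_lt_one hεY

/-- Impossibility of nontrivial object-conditional validity (finite-label toy version):
`Y` is finite with at least 2 labels, `X` is an uncountable standard Borel space, and the
set predictor `Γ` is object-conditionally valid at level `ε < 1 / |Y|` under every
data-generating distribution with `X`-marginal `RX` and arbitrary label kernel `Q`
(training data i.i.d. from `RX ⊗ₘ Q`, conditional coverage at the test object `x`).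
Then for every atomless `RX` and every kernel `Q`, for `RX`-almost every test object `x`
(which then almost surely does not appear among the training objects) the predictor
outputs the trivial full prediction set `Γ = Y` with positive probability. -/
theorem stmt18 {X Y : Type*} [MeasurableSpace X] [StandardBorelSpace X] [Uncountable X]
    [Fintype Y] [MeasurableSpace Y] [MeasurableSingletonClass Y]
    (hY : 2 ≤ Fintype.card Y)
    (n : ℕ) (ε : ℝ) (hε : 0 < ε) (hεY : ε < 1 / Fintype.card Y)
    (Γ : (Fin n → X × Y) → X → Set Y)
    (RX : Measure X) [IsProbabilityMeasure RX] (hRX : ∀ a : X, RX {a} = 0)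
    (hvalid : ∀ Q : Kernel X Y, IsMarkovKernel Q →
      ∀ᵐ x ∂ RX,
        1 - ENNReal.ofReal ε ≤
          ∫⁻ t, Q x (Γ t x) ∂(Measure.pi fun _ : Fin n => RX.compProd Q)) :
    ∀ Q : Kernel X Y, IsMarkovKernel Q →
      ∀ᵐ x ∂ RX,
        (Measure.pi fun _ : Fin n => RX.compProd Q) {t | ∃ i, (t i).1 = x} = 0
        ∧ 0 < (Measure.pi fun _ : Fin n => RX.compProd Q) {t | Γ t x = Set.univ} :=
  stmt18_general n ε hεY Γ RX hRX hvalid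
end
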